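/- Let n ≥ 1 and m ≥ 1, let e = (e_1,…,e_n) be in I_n and f = (f_1,…,f_m) be in I_m, and set k = maxid(e) and ℓ = maxid(f). Define g = (g_1,…,g_{n+m}) = (e_1,…,e_k, e_k+f_1,…,e_k+f_m, e_{k+1},…,e_n). Then g is an inversion sequence of length n+m avoiding both 101 and 102 (i.e., g is in I_{n+m}), maxid(g) = k+ℓ and max(g) = e_k + f_ℓ, so that maxid(g) − max(g) = (k − e_k) + (ℓ − f_ℓ); moreover t − g_t > k − g_k for every index t with k < t ≤ n+m. -/

import Mathlib

/-- An `F`-step: `(0,1)` or `(a,b)` with `a ≥ 1` and `b ≤ 1`. -/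
def IsFStep (s : ℤ × ℤ) : Prop := s = (0, 1) ∨ (1 ≤ s.1 ∧ s.2 ≤ 1)

/-- An `F`-path: a sequence of `F`-steps whose prefix sums satisfy
`a_1 + ⋯ + a_i ≤ b_1 + ⋯ + b_i`. -/
def IsFPath (Q : List (ℤ × ℤ)) : Prop :=
  (∀ s ∈ Q, IsFStep s) ∧
  ∀ i : ℕ, ((Q.take i).map Prod.fst).sum ≤ ((Q.take i).map Prod.snd).sum

/-- The set of `F`-paths of length `n`. -/
def FPaths (n : ℕ) : Set (List (ℤ × ℤ)) := {Q | Q.length = n ∧ IsFPath Q}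

def fheight (Q : List (ℤ × ℤ)) : ℤ := (Q.map Prod.snd).sum - (Q.map Prod.fst).sum

def fnorth (Q : List (ℤ × ℤ)) : ℕ := Q.countP (fun s => decide (s = ((0 : ℤ), (1 : ℤ))))

def faone (Q : List (ℤ × ℤ)) : ℕ := Q.countP (fun s => decide (s.1 = 1))

def fbone (Q : List (ℤ × ℤ)) : ℕ := Q.countP (fun s => decide (s.2 = 1))

/-- Steps of a Schröder path. -/
inductive SStep : Type
  | u | d | h
deriving DecidableEq

/-- The width of a Schröder step. -/
def swidth : SStep → ℕ
  | .u => 1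
  | .d => 1
  | .h => 2

/-- The height-change of a Schröder step. -/
def shc : SStep → ℤ
  | .u => 1
  | .d => -1
  | .h => 0

/-- A Schröder path of semilength `n`. -/
def IsSchroder (n : ℕ) (P : List SStep) : Prop :=
  (P.map swidth).sum = 2 * n ∧ (P.map shc).sum = 0 ∧
  ∀ i : ℕ, 0 ≤ ((P.take i).map shc).sum

/-- Schröder paths of semilength `n` without triple descents. -/
def SchP (n : ℕ) : Set (List SStep) :=
  {P | IsSchroder n P ∧ ¬ [SStep.d, SStep.d, SStep.d] <:+: P}

/-- Number of `h` letters preceded by a prefix of total height-change `0`. -/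
noncomputable def scomp (P : List SStep) : ℕ :=
  Set.ncard {i : ℕ | P[i]? = some SStep.h ∧ ((P.take i).map shc).sum = 0}

/-- Number of `h` letters plus number of double descents. -/
noncomputable def shdd (P : List SStep) : ℕ :=
  P.countP (fun s => decide (s = SStep.h)) +
    Set.ncard {i : ℕ | P[i]? = some SStep.d ∧ P[i + 1]? = some SStep.d}

/-- Number of peaks `ud`. -/
noncomputable def speak (P : List SStep) : ℕ :=
  Set.ncard {i : ℕ | P[i]? = some SStep.u ∧ P[i + 1]? = some SStep.d}

/-- Steps of a bicolored Dyck path: up, red down, black down. -/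
inductive BStep : Type
  | u | dR | dB
deriving DecidableEq

/-- A restricted bicolored Dyck path of semilength `n`:
`u^{i_1} dR^{j_1} dB^{k_1} ⋯ u^{i_{ℓ-1}} dR^{j_{ℓ-1}} dB^{k_{ℓ-1}} u^{i_ℓ} dR^{j_ℓ}`
with positive `i`'s and `k`'s, `∑ i = n`, `∑ j + ∑ k = n`, and every prefix having
at least as many `u`'s as down steps. -/
def IsRBD (n : ℕ) (B : List BStep) : Prop :=
  (∃ (blocks : List (ℕ × ℕ × ℕ)) (iL jL : ℕ),
    (∀ t ∈ blocks, 1 ≤ t.1 ∧ 1 ≤ t.2.2) ∧ 1 ≤ iL ∧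
    B = (blocks.map (fun t =>
        List.replicate t.1 BStep.u ++ List.replicate t.2.1 BStep.dR ++
          List.replicate t.2.2 BStep.dB)).flatten ++
        (List.replicate iL BStep.u ++ List.replicate jL BStep.dR) ∧
    (blocks.map (fun t => t.1)).sum + iL = n ∧
    (blocks.map (fun t => t.2.1)).sum + jL + (blocks.map (fun t => t.2.2)).sum = n) ∧
  ∀ i : ℕ, (B.take i).countP (fun s => decide (s ≠ BStep.u)) ≤
    (B.take i).countP (fun s => decide (s = BStep.u))

/-- The length of the final run of red down steps. -/
def blast (B : List BStep) : ℕ := (B.reverse.takeWhile (fun s => decide (s = BStep.dR))).length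

/-- The number of double ascents `uu`. -/
noncomputable def bdasc (B : List BStep) : ℕ :=
  Set.ncard {i : ℕ | B[i]? = some BStep.u ∧ B[i + 1]? = some BStep.u}

/-- The number of occurrences of `u dB u` or `dR dB u`. -/
noncomputable def bbval (B : List BStep) : ℕ :=
  Set.ncard {i : ℕ | (B[i]? = some BStep.u ∨ B[i]? = some BStep.dR) ∧
    B[i + 1]? = some BStep.dB ∧ B[i + 2]? = some BStep.u}

/-- `π : ℕ → ℕ` encodes a permutation of `{1,…,N}`, with value `0` outside
(in particular `π 0 = 0`). -/
def IsPermOn (N : ℕ) (π : ℕ → ℕ) : Prop :=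
  Set.BijOn π (Set.Icc 1 N) (Set.Icc 1 N) ∧ ∀ i, i ∉ Set.Icc 1 N → π i = 0

/-- `π` contains the pattern given by the word `σ`. -/
def ContainsPat (N : ℕ) (π : ℕ → ℕ) (σ : List ℕ) : Prop :=
  ∃ f : Fin σ.length → ℕ, StrictMono f ∧ (∀ t, f t ∈ Set.Icc 1 N) ∧
    ∀ s t : Fin σ.length, π (f s) < π (f t) ↔ σ.get s < σ.get t

/-- Permutations of `{1,…,N}` avoiding the patterns `2341`, `2431` and `3241`. -/
def PermSet (N : ℕ) : Set (ℕ → ℕ) :=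
  {π | IsPermOn N π ∧ ¬ContainsPat N π [2, 3, 4, 1] ∧ ¬ContainsPat N π [2, 4, 3, 1] ∧
    ¬ContainsPat N π [3, 2, 4, 1]}

/-- `block(π)`: the number of `j ∈ {1,…,N}` with `{π(1),…,π(j)} = {1,…,j}`. -/
noncomputable def blockStat (N : ℕ) (π : ℕ → ℕ) : ℕ :=
  Set.ncard {j : ℕ | 1 ≤ j ∧ j ≤ N ∧ π '' Set.Icc 1 j = Set.Icc 1 j}

/-- `asc(π)`: the number of ascents of `π`. -/
noncomputable def ascStat (N : ℕ) (π : ℕ → ℕ) : ℕ :=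
  Set.ncard {i : ℕ | 1 ≤ i ∧ i + 1 ≤ N ∧ π i < π (i + 1)}

/-- `crit(π)`: the number of critical entries of `π`. -/
noncomputable def critStat (N : ℕ) (π : ℕ → ℕ) : ℕ :=
  Set.ncard {i : ℕ | 1 ≤ i ∧ i ≤ N ∧ ∀ j k : ℕ, 1 ≤ j → j < i → i < k → k ≤ N →
    π j < π i → π k < π i → π j < π k}

/-- An inversion sequence: `0 ≤ e_i < i` (1-indexed). -/
def IsInvSeq (e : List ℕ) : Prop := ∀ i : Fin e.length, e.get i < i.val + 1

/-- `e` contains the pattern `101`. -/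
def Contains101 (e : List ℕ) : Prop :=
  ∃ i j k : Fin e.length, i < j ∧ j < k ∧ e.get j < e.get i ∧ e.get i = e.get k

/-- `e` contains the pattern `102`. -/
def Contains102 (e : List ℕ) : Prop :=
  ∃ i j k : Fin e.length, i < j ∧ j < k ∧ e.get j < e.get i ∧ e.get i < e.get k

/-- `e` contains the pattern `021`. -/
def Contains021 (e : List ℕ) : Prop :=
  ∃ i j k : Fin e.length, i < j ∧ j < k ∧ e.get i < e.get k ∧ e.get k < e.get j

/-- Inversion sequences of length `n` avoiding `101` and `102`. -/
def ISet (n : ℕ) : Set (List ℕ) :=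
  {e | e.length = n ∧ IsInvSeq e ∧ ¬Contains101 e ∧ ¬Contains102 e}

/-- Inversion sequences of length `n` avoiding `101` and `021`. -/
def JSet (n : ℕ) : Set (List ℕ) :=
  {e | e.length = n ∧ IsInvSeq e ∧ ¬Contains101 e ∧ ¬Contains021 e}

/-- The largest entry of `e` (`0` for the empty sequence). -/
def maxVal (e : List ℕ) : ℕ := e.foldr max 0

/-- The largest (1-indexed) position of the maximal entry of `e`. -/
def maxid (e : List ℕ) : ℕ := e.length - e.reverse.idxOf (maxVal e)

/-- `e` with the entry at position `maxid e` removed. -/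
def ehat (e : List ℕ) : List ℕ := e.eraseIdx (maxid e - 1)

/-- `omi(e)`: the number of `i ∈ {1,…,n}` not occurring as an entry of `e`. -/
noncomputable def omi (e : List ℕ) : ℕ := Set.ncard {i : ℕ | 1 ≤ i ∧ i ≤ e.length ∧ i ∉ e}

/-- `cons(e)`: the number of `i ∈ {1,…,n-1}` such that both `i-1` and `i` occur in `e`. -/
noncomputable def consStat (e : List ℕ) : ℕ :=
  Set.ncard {i : ℕ | 1 ≤ i ∧ i + 1 ≤ e.length ∧ (i - 1) ∈ e ∧ i ∈ e}

/-- `first(e)`: the length of the initial run of zeros of `e`. -/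
def firstStat (e : List ℕ) : ℕ := (e.takeWhile (fun v => decide (v = 0))).length

/-- `single(e)`: the number of positive integers occurring exactly once in `e`. -/
noncomputable def singleStat (e : List ℕ) : ℕ := Set.ncard {v : ℕ | 1 ≤ v ∧ e.count v = 1}

/-- The binomial coefficient `C(p,q)`, interpreted as `0` unless `0 ≤ q ≤ p`. -/
def C (p q : ℤ) : ℤ := if 0 ≤ q ∧ q ≤ p then (p.toNat.choose q.toNat : ℤ) else 0

/-!
If `e` avoids `101` and `102`, its entries are weakly increasing up to the last maximum
`e_k` and strictly below `e_k` afterwards. In the direct sum `g` the shifted copy of `f` lies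
weakly above everything before it and strictly above everything after it, so an occurrence
`g_j < g_i ≤ g_t` (with `i < j < t`) would have to live inside one of the copies of `e` or `f`.
The same block structure shows that the maximum `e_k + f_ℓ` of `g` is attained last at
position `k + ℓ`, and that after position `k` the quantity `t - g_t` exceeds `k - e_k`: inside
the shifted `f` because `f` is an inversion sequence, after it because `e_k` is maximal.
-/

theorem le_maxVal {e : List ℕ} {v : ℕ} (h : v ∈ e) : v ≤ maxVal e :=
  List.le_max_of_le h le_rfl

theorem maxVal_le {e : List ℕ} {c : ℕ} (h : ∀ v ∈ e, v ≤ c) : maxVal e ≤ c :=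
  List.max_le_of_forall_le e c h

theorem maxVal_mem {e : List ℕ} (h : e ≠ []) : maxVal e ∈ e :=
  List.maximum_mem (List.foldr_max_of_ne_nil h).symm

theorem getD_le_maxVal (e : List ℕ) (i : ℕ) : e.getD i 0 ≤ maxVal e := by
  rcases lt_or_ge i e.length with hi | hi
  · rw [List.getD_eq_getElem _ 0 hi]; exact le_maxVal (List.getElem_mem _)
  · rw [List.getD_eq_default _ 0 hi]; exact Nat.zero_le _

theorem isInvSeq_iff {e : List ℕ} : IsInvSeq e ↔ ∀ i < e.length, e.getD i 0 ≤ i := by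
  refine ⟨fun he i hi => ?_, fun he i => ?_⟩
  · have := he ⟨i, hi⟩
    rw [List.getD_eq_getElem _ 0 hi]
    exact Nat.lt_succ_iff.1 this
  · have := he i i.isLt
    rw [List.getD_eq_getElem _ 0 i.isLt] at this
    exact Nat.lt_succ_iff.2 this

theorem maxid_eq_iff {e : List ℕ} {p : ℕ} (hp : 1 ≤ p) (hpe : p ≤ e.length) :
    maxid e = p ↔ e.getD (p - 1) 0 = maxVal e ∧
      ∀ i, p ≤ i → i < e.length → e.getD i 0 ≠ maxVal e := by
  have hidx : maxid e = p ↔ e.reverse.idxOf (maxVal e) = e.length - p := by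
    have := List.idxOf_le_length (l := e.reverse) (a := maxVal e)
    simp only [List.length_reverse] at this
    unfold maxid; omega
  rw [hidx, List.idxOf, List.findIdx_eq (by simp; omega)]
  simp only [List.getElem_reverse, beq_iff_eq, beq_eq_false_iff_ne]
  constructor
  · rintro ⟨hlast, hafter⟩
    refine ⟨?_, fun i hpi hi => ?_⟩
    · grind
    · have := hafter (e.length - 1 - i) (by omega)
      grind
  · rintro ⟨hlast, hafter⟩
    refine ⟨?_, fun j hj => ?_⟩
    · grind
    · have := hafter (e.length - 1 - j) (by omega) (by omega)
      grind

theorem maxid_le_length (e : List ℕ) : maxid e ≤ e.length := Nat.sub_le _ _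

theorem one_le_maxid {e : List ℕ} (h : e ≠ []) : 1 ≤ maxid e := by
  have := List.idxOf_lt_length_of_mem (List.mem_reverse.2 (maxVal_mem h))
  rw [List.length_reverse] at this
  unfold maxid; omega

theorem getD_maxid_sub_one (e : List ℕ) : e.getD (maxid e - 1) 0 = maxVal e := by
  rcases eq_or_ne e [] with rfl | h
  · rfl
  · exact ((maxid_eq_iff (one_le_maxid h) (maxid_le_length e)).1 rfl).1

theorem getD_lt_maxVal_of_maxid_le {e : List ℕ} {i : ℕ} (hi : maxid e ≤ i)
    (hie : i < e.length) : e.getD i 0 < maxVal e := by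
  have hne : e ≠ [] := List.ne_nil_of_length_pos (by omega)
  have hle := getD_le_maxVal e i
  have hneq := ((maxid_eq_iff (one_le_maxid hne) (maxid_le_length e)).1 rfl).2 i hi hie
  omega

theorem maxVal_le_maxid {e : List ℕ} (he : IsInvSeq e) : maxVal e ≤ maxid e := by
  rcases eq_or_ne e [] with rfl | h
  · exact Nat.zero_le _
  · have hk := one_le_maxid h
    have := isInvSeq_iff.1 he (maxid e - 1) (by have := maxid_le_length e; omega)
    rw [getD_maxid_sub_one] at this
    omega

def Avoids101102 (x : List ℕ) : Prop :=
  ∀ i j t, i < j → j < t → t < x.length →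
    x.getD j 0 < x.getD i 0 → x.getD t 0 < x.getD i 0

theorem avoids101102_iff {x : List ℕ} :
    Avoids101102 x ↔ ¬Contains101 x ∧ ¬Contains102 x := by
  constructor
  · intro h
    constructor <;>
    · rintro ⟨i, j, t, hij, hjt, hji, hit⟩
      have := h i j t hij hjt t.isLt
      simp only [List.getD_eq_getElem _ 0, i.isLt, j.isLt, t.isLt, List.get_eq_getElem]
        at this hji hit
      omega
  · rintro ⟨h101, h102⟩ i j t hij hjt ht hji
    have hj : j < x.length := by omega
    have hi : i < x.length := by omega
    simp only [List.getD_eq_getElem _ 0, hi, hj, ht] at hji ⊢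
    by_contra! hit
    rcases hit.lt_or_eq with hlt | heq
    · exact h102 ⟨⟨i, hi⟩, ⟨j, hj⟩, ⟨t, ht⟩, hij, hjt, hji, hlt⟩
    · exact h101 ⟨⟨i, hi⟩, ⟨j, hj⟩, ⟨t, ht⟩, hij, hjt, hji, heq⟩

theorem Avoids101102.getD_mono_of_lt_maxid {e : List ℕ} (he : Avoids101102 e) {i j : ℕ}
    (hij : i ≤ j) (hj : j < maxid e) : e.getD i 0 ≤ e.getD j 0 := by
  by_contra! hji
  have hk := maxid_le_length e
  have hmax := getD_maxid_sub_one e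
  have hie := getD_le_maxVal e i
  have hij' : i < j := lt_of_le_of_ne hij (by rintro rfl; omega)
  have hjk : j ≠ maxid e - 1 := by rintro rfl; omega
  have := he i j (maxid e - 1) (by omega) (by omega) (by omega) hji
  omega

def directSum (e f : List ℕ) : List ℕ :=
  e.take (maxid e) ++ f.map (fun v => maxVal e + v) ++ e.drop (maxid e)

section directSum

variable {e f : List ℕ} {i : ℕ}

theorem length_directSum (e f : List ℕ) : (directSum e f).length = e.length + f.length := by
  have := maxid_le_length e
  simp only [directSum, List.length_append, List.length_take, List.length_map, List.length_drop]
  omega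

theorem getD_directSum_of_lt (hi : i < maxid e) : (directSum e f).getD i 0 = e.getD i 0 := by
  have := maxid_le_length e
  unfold directSum
  grind

theorem getD_directSum_of_le_of_lt (h₁ : maxid e ≤ i) (h₂ : i < maxid e + f.length) :
    (directSum e f).getD i 0 = maxVal e + f.getD (i - maxid e) 0 := by
  have := maxid_le_length e
  unfold directSum
  grind

theorem getD_directSum_of_le (h : maxid e + f.length ≤ i) :
    (directSum e f).getD i 0 = e.getD (i - f.length) 0 := by
  have := maxid_le_length e
  unfold directSum
  grind

theorem maxVal_directSum (e f : List ℕ) : maxVal (directSum e f) = maxVal e + maxVal f := by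
  refine le_antisymm (maxVal_le fun v hv => ?_) ?_
  · simp only [directSum, List.mem_append, List.mem_map] at hv
    rcases hv with (hv | ⟨w, hw, rfl⟩) | hv
    · exact (le_maxVal (List.mem_of_mem_take hv)).trans (Nat.le_add_right _ _)
    · exact Nat.add_le_add_left (le_maxVal hw) _
    · exact (le_maxVal (List.mem_of_mem_drop hv)).trans (Nat.le_add_right _ _)
  · rcases eq_or_ne f [] with rfl | hf
    · simp [directSum, maxVal]
    · exact le_maxVal (by simp [directSum, maxVal_mem hf])

theorem maxid_directSum (hf : f ≠ []) : maxid (directSum e f) = maxid e + maxid f := by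
  have hl := one_le_maxid hf
  have hlf := maxid_le_length f
  rw [maxid_eq_iff (by omega) (by rw [length_directSum]; have := maxid_le_length e; omega),
    maxVal_directSum, getD_directSum_of_le_of_lt (by omega) (by omega),
    show maxid e + maxid f - 1 - maxid e = maxid f - 1 by omega, getD_maxid_sub_one]
  refine ⟨rfl, fun i hi hil => ?_⟩
  rw [length_directSum] at hil
  rcases lt_or_ge i (maxid e + f.length) with hif | hif
  · rw [getD_directSum_of_le_of_lt (by omega) hif]
    have := getD_lt_maxVal_of_maxid_le (e := f) (i := i - maxid e) (by omega) (by omega)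
    omega
  · rw [getD_directSum_of_le hif]
    have := getD_lt_maxVal_of_maxid_le (e := e) (i := i - f.length) (by omega) (by omega)
    omega

theorem isInvSeq_directSum (he : IsInvSeq e) (hf : IsInvSeq f) : IsInvSeq (directSum e f) := by
  rw [isInvSeq_iff] at he hf ⊢
  intro i hi
  rw [length_directSum] at hi
  have hk := maxVal_le_maxid (isInvSeq_iff.2 he)
  rcases lt_or_ge i (maxid e) with h₁ | h₁
  · rw [getD_directSum_of_lt h₁]; exact he i (by have := maxid_le_length e; omega)
  rcases lt_or_ge i (maxid e + f.length) with h₂ | h₂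
  · rw [getD_directSum_of_le_of_lt h₁ h₂]; have := hf (i - maxid e) (by omega); omega
  · rw [getD_directSum_of_le h₂]; have := he (i - f.length) (by omega); omega

theorem sub_lt_sub_getD_directSum (hf : IsInvSeq f) {t : ℕ} (ht : maxid e < t)
    (htl : t ≤ e.length + f.length) :
    (maxid e : ℤ) - maxVal e < t - (directSum e f).getD (t - 1) 0 := by
  rcases lt_or_ge (t - 1) (maxid e + f.length) with h | h
  · rw [getD_directSum_of_le_of_lt (by omega) h]
    have := isInvSeq_iff.1 hf (t - 1 - maxid e) (by omega)
    omega
  · rw [getD_directSum_of_le h]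
    have := getD_lt_maxVal_of_maxid_le (e := e) (i := t - 1 - f.length) (by omega) (by omega)
    omega

theorem avoids101102_directSum (he : Avoids101102 e) (hf : Avoids101102 f) :
    Avoids101102 (directSum e f) := by
  intro i j t hij hjt ht hji
  rw [length_directSum] at ht
  have hk := maxid_le_length e
  set k := maxid e
  set m := f.length
  have left (i) (hi : i < k) : (directSum e f).getD i 0 = e.getD i 0 ∧ e.getD i 0 ≤ maxVal e :=
    ⟨getD_directSum_of_lt hi, getD_le_maxVal e i⟩
  have middle (i) (h₁ : k ≤ i) (h₂ : i < k + m) :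
      (directSum e f).getD i 0 = maxVal e + f.getD (i - k) 0 :=
    getD_directSum_of_le_of_lt h₁ h₂
  have right (i) (h₁ : k + m ≤ i) (h₂ : i < e.length + m) :
      (directSum e f).getD i 0 = e.getD (i - m) 0 ∧ e.getD (i - m) 0 < maxVal e :=
    ⟨getD_directSum_of_le h₁, getD_lt_maxVal_of_maxid_le (by omega) (by omega)⟩
  rcases lt_or_ge j k with hjk | hjk
  · rw [(left i (by omega)).1, (left j hjk).1] at hji
    exact absurd (he.getD_mono_of_lt_maxid hij.le hjk) (by omega)
  rcases lt_or_ge j (k + m) with hjm | hjm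
  · rcases lt_or_ge i k with hik | hik
    · rw [(left i hik).1, middle j hjk hjm] at hji
      have := (left i hik).2
      omega
    rw [middle i hik (by omega)] at hji ⊢
    rw [middle j hjk hjm] at hji
    rcases lt_or_ge t (k + m) with htm | htm
    · rw [middle t (by omega) htm]
      have := hf (i - k) (j - k) (t - k) (by omega) (by omega) (by omega) (by omega)
      omega
    · have := right t htm ht
      omega
  have htm : k + m ≤ t := by omega
  rw [(right j hjm (by omega)).1] at hji
  rw [(right t htm ht).1]
  rcases lt_or_ge i k with hik | hik
  · rw [(left i hik).1] at hji ⊢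
    exact he i (j - m) (t - m) (by omega) (by omega) (by omega) hji
  rcases lt_or_ge i (k + m) with him | him
  · rw [middle i hik him]
    have := (right t htm ht).2
    omega
  · rw [(right i him (by omega)).1] at hji ⊢
    exact he (i - m) (j - m) (t - m) (by omega) (by omega) (by omega) hji

end directSum

/-- Lemma 7.1: the direct sum of `(101,102)`-avoiding inversion sequences. -/
theorem inv102_direct_sum (n m : ℕ) (hn : 1 ≤ n) (hm : 1 ≤ m) (e f : List ℕ)
    (he : e ∈ ISet n) (hf : f ∈ ISet m)
    (k l : ℕ) (hk : k = maxid e) (hl : l = maxid f)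
    (g : List ℕ)
    (hg : g = e.take k ++ f.map (fun v => e.getD (k - 1) 0 + v) ++ e.drop k) :
    g ∈ ISet (n + m) ∧
    maxid g = k + l ∧
    maxVal g = e.getD (k - 1) 0 + f.getD (l - 1) 0 ∧
    (maxid g : ℤ) - (maxVal g : ℤ) =
      ((k : ℤ) - (e.getD (k - 1) 0 : ℤ)) + ((l : ℤ) - (f.getD (l - 1) 0 : ℤ)) ∧
    ∀ t : ℕ, k < t → t ≤ n + m →
      (k : ℤ) - (g.getD (k - 1) 0 : ℤ) < (t : ℤ) - (g.getD (t - 1) 0 : ℤ) := by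
  obtain ⟨rfl, heinv, he⟩ := he
  obtain ⟨rfl, hfinv, hf⟩ := hf
  have hfne : f ≠ [] := List.ne_nil_of_length_pos hm
  have hk : 1 ≤ maxid e := one_le_maxid (List.ne_nil_of_length_pos hn)
  subst k l
  simp only [getD_maxid_sub_one] at hg ⊢
  change g = directSum e f at hg
  subst hg
  rw [getD_directSum_of_lt (i := maxid e - 1) (by omega), getD_maxid_sub_one,
    maxid_directSum hfne, maxVal_directSum]
  refine ⟨⟨length_directSum e f, isInvSeq_directSum heinv hfinv, avoids101102_iff.1 <|
      avoids101102_directSum (avoids101102_iff.2 he) (avoids101102_iff.2 hf)⟩,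
    rfl, rfl, by push_cast; ring, fun t ht htl => sub_lt_sub_getD_directSum hfinv ht htl⟩
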